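/- arXiv:2604.08998 — 13 statements merged into one kernel-verified Lean document; each statement's English description precedes it below -/
import Mathlib

section
/- Let n ≥ 2 be an even integer. Then the polynomial D(F_n,x) = x^n (x+2)^n + x (1+x)^{2n} has exactly three real zeros: x = 0, one simple zero x_n^- lying in the open interval (-2,-1), and one simple zero x_n^+ lying in the open interval (-1,0). -/
/-!
Write `D = D(F_n, ·)`. It is positive on `(0, ∞)`, negative on `(-∞, -2]`, and `D(-1) = 1` for
even `n`. At a zero `x` of `D`, substituting `(x (x + 2))^n = -x (1 + x)^(2n)` into `D'` gives
`D'(x) · x (x + 2) = x (1 + x)^(2n-1) ((x + 1)(x + 2) - 2n)`, so on `(-2, 0)` the derivative at a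
zero has the sign of `-(1 + x)`: it is nonzero, and of a fixed sign on each of `(-2, -1)` and
`(-1, 0)`.
A function whose derivative is positive at each of its zeros in an interval vanishes at most once
there. Existence follows from the intermediate value theorem, using `D(-2) < 0 < D(-1)` and, near
`0`, `D(0) = 0` with `D'(0) = 1`.
-/

open Set Filter Topology

section SignNearZero

variable {f : ℝ → ℝ} {x₀ : ℝ}

theorem exists_pos_Ioo_of_deriv_pos (hf : 0 < deriv f x₀) (h0 : f x₀ = 0) {b : ℝ}
    (hb : x₀ < b) : ∃ y ∈ Ioo x₀ b, 0 < f y := by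
  obtain ⟨y, hfy, hy⟩ := ((eventually_nhdsWithin_sign_eq_of_deriv_pos hf h0).filter_mono
    nhdsWithin_le_nhds |>.and (Ioo_mem_nhdsGT hb)).exists (f := 𝓝[>] x₀)
  rw [sign_pos (sub_pos.mpr hy.1), sign_eq_one_iff] at hfy
  exact ⟨y, hy, hfy⟩

theorem exists_neg_Ioo_of_deriv_pos (hf : 0 < deriv f x₀) (h0 : f x₀ = 0) {a : ℝ}
    (ha : a < x₀) : ∃ y ∈ Ioo a x₀, f y < 0 := by
  obtain ⟨y, hfy, hy⟩ := ((eventually_nhdsWithin_sign_eq_of_deriv_pos hf h0).filter_mono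
    nhdsWithin_le_nhds |>.and (Ioo_mem_nhdsLT ha)).exists (f := 𝓝[<] x₀)
  rw [sign_neg (sub_neg.mpr hy.2), sign_eq_neg_one_iff] at hfy
  exact ⟨y, hy, hfy⟩

end SignNearZero

theorem Set.OrdConnected.subsingleton_zeros_of_deriv_pos {f : ℝ → ℝ} {s : Set ℝ}
    (hs : s.OrdConnected) (hf : ContinuousOn f s) (hf' : ∀ x ∈ s, f x = 0 → 0 < deriv f x) :
    {x ∈ s | f x = 0}.Subsingleton := by
  suffices ∀ a ∈ s, ∀ b ∈ s, a < b → f a = 0 → f b = 0 → False by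
    rintro a ⟨ha, ha0⟩ b ⟨hb, hb0⟩
    by_contra hne
    rcases lt_or_gt_of_ne hne with hab | hba
    exacts [this a ha b hb hab ha0 hb0, this b hb a ha hba hb0 ha0]
  intro a ha b hb hab ha0 hb0
  -- `f` leaves `a` upwards; the first zero `c` after that is then approached from above,
  -- which is incompatible with `0 < deriv f c`.
  obtain ⟨y, hy, hfy⟩ := exists_pos_Ioo_of_deriv_pos (hf' a ha ha0) ha0 hab
  have hyb : Icc y b ⊆ s := hs.out (hs.out ha hb ⟨hy.1.le, hy.2.le⟩) hb
  obtain ⟨c, ⟨hc, hc0⟩, hc_least⟩ := (isCompact_Icc.of_isClosed_subset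
    ((hf.mono hyb).preimage_isClosed_of_isClosed isClosed_Icc (isClosed_singleton (x := 0)))
    inter_subset_left).exists_isLeast ⟨b, ⟨hy.2.le, le_rfl⟩, hb0⟩
  have hyc : y < c := lt_of_le_of_ne hc.1 (by rintro rfl; exact hfy.ne' hc0)
  have pos_before : ∀ x ∈ Ico y c, 0 < f x := by
    intro x hx
    by_contra! hfx
    have hxb : x ≤ b := (hx.2.trans_le hc.2).le
    obtain ⟨z, hz, hz0⟩ := intermediate_value_Icc' hx.1
      (hf.mono ((Icc_subset_Icc_right hxb).trans hyb)) ⟨hfx, hfy.le⟩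
    exact (hz.2.trans_lt hx.2).not_ge (hc_least ⟨⟨hz.1, hz.2.trans hxb⟩, hz0⟩)
  obtain ⟨x, hx, hfx⟩ := exists_neg_Ioo_of_deriv_pos (hf' c (hyb hc) hc0) hc0 hyc
  exact (pos_before x ⟨hx.1.le, hx.2⟩).not_gt hfx

def friendshipDomPoly (n : ℕ) (x : ℝ) : ℝ :=
  x ^ n * (x + 2) ^ n + x * (1 + x) ^ (2 * n)

theorem continuous_friendshipDomPoly (n : ℕ) : Continuous (friendshipDomPoly n) := by
  unfold friendshipDomPoly; fun_prop

theorem hasDerivAt_friendshipDomPoly (n : ℕ) (x : ℝ) :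
    HasDerivAt (friendshipDomPoly n)
      (n * x ^ (n - 1) * (x + 2) ^ n + x ^ n * (n * (x + 2) ^ (n - 1))
        + ((1 + x) ^ (2 * n) + x * (2 * n * (1 + x) ^ (2 * n - 1)))) x := by
  have h := ((hasDerivAt_pow n x).fun_mul (((hasDerivAt_id' x).add_const 2).fun_pow n)).fun_add
    ((hasDerivAt_id' x).fun_mul (((hasDerivAt_id' x).const_add 1).fun_pow (2 * n)))
  simp only [mul_one, one_mul, Nat.cast_mul, Nat.cast_ofNat] at h
  exact h

theorem deriv_friendshipDomPoly_zero {n : ℕ} (hn : 2 ≤ n) :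
    deriv (friendshipDomPoly n) 0 = 1 := by
  rw [(hasDerivAt_friendshipDomPoly n 0).deriv, zero_pow (by omega), zero_pow (by omega)]
  ring

theorem friendshipDomPoly_zero {n : ℕ} (hn : n ≠ 0) : friendshipDomPoly n 0 = 0 := by
  simp [friendshipDomPoly, hn]

theorem friendshipDomPoly_neg_one {n : ℕ} (hn : n ≠ 0) (he : Even n) :
    friendshipDomPoly n (-1) = 1 := by
  norm_num [friendshipDomPoly, hn, he.neg_one_pow]

theorem friendshipDomPoly_pos (n : ℕ) {x : ℝ} (hx : 0 < x) : 0 < friendshipDomPoly n x := by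
  unfold friendshipDomPoly; positivity

theorem friendshipDomPoly_neg_of_le_neg_two (n : ℕ) {x : ℝ} (hx : x ≤ -2) :
    friendshipDomPoly n x < 0 := by
  have hsq : 1 ≤ (1 + x) ^ 2 := by nlinarith
  have hdom : (x * (x + 2)) ^ n ≤ ((1 + x) ^ 2) ^ n :=
    pow_le_pow_left₀ (by nlinarith) (by nlinarith) n
  have hpow : 1 ≤ ((1 + x) ^ 2) ^ n := one_le_pow₀ hsq
  calc friendshipDomPoly n x = (x * (x + 2)) ^ n + x * ((1 + x) ^ 2) ^ n := by
        rw [friendshipDomPoly, mul_pow, pow_mul]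
    _ < 0 := by nlinarith

theorem deriv_friendshipDomPoly_mul_of_eq_zero {n : ℕ} (hn : n ≠ 0) {x : ℝ}
    (hx : friendshipDomPoly n x = 0) :
    deriv (friendshipDomPoly n) x * (x * (x + 2))
      = x * (1 + x) ^ (2 * n - 1) * ((x + 1) * (x + 2) - 2 * n) := by
  obtain ⟨m, rfl⟩ := Nat.exists_eq_add_one_of_ne_zero hn
  unfold friendshipDomPoly at hx
  rw [(hasDerivAt_friendshipDomPoly _ x).deriv, show 2 * (m + 1) - 1 = 2 * m + 1 by omega,
    Nat.add_sub_cancel]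
  push_cast
  linear_combination (2 * ((m : ℝ) + 1) * (1 + x)) * hx

theorem deriv_friendshipDomPoly_mul_one_add_neg {n : ℕ} (hn : n ≠ 0) {x : ℝ}
    (hx : x ∈ Ioo (-2) 0) (hx0 : friendshipDomPoly n x = 0) :
    deriv (friendshipDomPoly n) x * (1 + x) < 0 := by
  have hx1 : 1 + x ≠ 0 := by
    rintro h
    rw [show x = -1 by linarith] at hx0
    norm_num [friendshipDomPoly, hn] at hx0
  have hxx : x * (x + 2) < 0 := mul_neg_of_neg_of_pos hx.2 (by linarith [hx.1])
  have hq : (x + 1) * (x + 2) - 2 * n < 0 := by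
    have : (1 : ℝ) ≤ n := by exact_mod_cast Nat.one_le_iff_ne_zero.mpr hn
    nlinarith [hx.1, hx.2]
  have hrhs : 0 < x * (1 + x) ^ (2 * n) * ((x + 1) * (x + 2) - 2 * n) :=
    mul_pos_of_neg_of_neg (mul_neg_of_neg_of_pos hx.2 ((even_two_mul n).pow_pos hx1)) hq
  have key : deriv (friendshipDomPoly n) x * (1 + x) * (x * (x + 2))
      = x * (1 + x) ^ (2 * n) * ((x + 1) * (x + 2) - 2 * n) := by
    have hpow : (1 + x) ^ (2 * n) = (1 + x) ^ (2 * n - 1) * (1 + x) := by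
      rw [← pow_succ, Nat.sub_add_cancel (by omega)]
    rw [mul_right_comm, deriv_friendshipDomPoly_mul_of_eq_zero hn hx0, hpow]
    ring
  exact neg_of_mul_pos_left (key ▸ hrhs) hxx.le

theorem exists_friendshipDomPoly_eq_zero_Ioo_neg_two_neg_one {n : ℕ} (hn : n ≠ 0)
    (he : Even n) : ∃ a ∈ Ioo (-2 : ℝ) (-1), friendshipDomPoly n a = 0 :=
  intermediate_value_Ioo (by norm_num) (continuous_friendshipDomPoly n).continuousOn
    ⟨friendshipDomPoly_neg_of_le_neg_two n le_rfl,
      by rw [friendshipDomPoly_neg_one hn he]; norm_num⟩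

theorem exists_friendshipDomPoly_eq_zero_Ioo_neg_one_zero {n : ℕ} (hn : 2 ≤ n) (he : Even n) :
    ∃ b ∈ Ioo (-1 : ℝ) 0, friendshipDomPoly n b = 0 := by
  obtain ⟨c, hc, hfc⟩ := exists_neg_Ioo_of_deriv_pos
    (by rw [deriv_friendshipDomPoly_zero hn]; norm_num) (friendshipDomPoly_zero (by omega))
    (by norm_num : (-1 : ℝ) < 0)
  obtain ⟨b, hb, hfb⟩ := intermediate_value_Ioo' hc.1.le
    (continuous_friendshipDomPoly n).continuousOn
    ⟨hfc, by rw [friendshipDomPoly_neg_one (by omega) he]; norm_num⟩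
  exact ⟨b, ⟨hb.1, hb.2.trans hc.2⟩, hfb⟩

theorem eq_zero_or_mem_Ioo_of_friendshipDomPoly_eq_zero {n : ℕ} (hn : n ≠ 0) (he : Even n)
    {x : ℝ} (hx : friendshipDomPoly n x = 0) :
    x = 0 ∨ x ∈ Ioo (-2) (-1) ∨ x ∈ Ioo (-1) 0 := by
  rcases le_or_gt x (-2) with h2 | h2
  · exact absurd hx (friendshipDomPoly_neg_of_le_neg_two n h2).ne
  rcases lt_trichotomy x (-1) with h1 | rfl | h1
  · exact Or.inr (Or.inl ⟨h2, h1⟩)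
  · norm_num [friendshipDomPoly_neg_one hn he] at hx
  rcases lt_trichotomy x 0 with h0 | rfl | h0
  · exact Or.inr (Or.inr ⟨h1, h0⟩)
  · exact Or.inl rfl
  · exact absurd hx (friendshipDomPoly_pos n h0).ne'

theorem subsingleton_friendshipDomPoly_zeros_Ioo_neg_two_neg_one {n : ℕ} (hn : n ≠ 0) :
    {x ∈ Ioo (-2 : ℝ) (-1) | friendshipDomPoly n x = 0}.Subsingleton :=
  ordConnected_Ioo.subsingleton_zeros_of_deriv_pos (continuous_friendshipDomPoly n).continuousOn
    fun x hx hx0 => by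
      have := deriv_friendshipDomPoly_mul_one_add_neg hn ⟨hx.1, hx.2.trans (by norm_num)⟩ hx0
      nlinarith [hx.2]

theorem subsingleton_friendshipDomPoly_zeros_Ioo_neg_one_zero {n : ℕ} (hn : n ≠ 0) :
    {x ∈ Ioo (-1 : ℝ) 0 | friendshipDomPoly n x = 0}.Subsingleton := by
  have := (ordConnected_Ioo (a := (-1 : ℝ)) (b := 0)).subsingleton_zeros_of_deriv_pos
    (f := fun x => -friendshipDomPoly n x)
    (continuous_friendshipDomPoly n).neg.continuousOn fun x hx hx0 => by
      have := deriv_friendshipDomPoly_mul_one_add_neg hn ⟨by linarith [hx.1], hx.2⟩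
        (neg_eq_zero.mp hx0)
      rw [deriv.fun_neg]
      nlinarith [hx.1]
  simpa using this

/-- For even `n ≥ 2`, the friendship-graph domination polynomial
`D(F_n,x) = x^n (x+2)^n + x (1+x)^(2n)` has exactly three real zeros:
`0`, a simple zero in `(-2,-1)`, and a simple zero in `(-1,0)`. -/
theorem friendship_exactly_three_real_zeros (n : ℕ) (hn : 2 ≤ n) (hne : Even n) :
    ∃ a b : ℝ, a ∈ Set.Ioo (-2 : ℝ) (-1) ∧ b ∈ Set.Ioo (-1 : ℝ) 0 ∧
      (fun x : ℝ => x ^ n * (x + 2) ^ n + x * (1 + x) ^ (2 * n)) a = 0 ∧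
      deriv (fun x : ℝ => x ^ n * (x + 2) ^ n + x * (1 + x) ^ (2 * n)) a ≠ 0 ∧
      (fun x : ℝ => x ^ n * (x + 2) ^ n + x * (1 + x) ^ (2 * n)) b = 0 ∧
      deriv (fun x : ℝ => x ^ n * (x + 2) ^ n + x * (1 + x) ^ (2 * n)) b ≠ 0 ∧
      ∀ x : ℝ, x ^ n * (x + 2) ^ n + x * (1 + x) ^ (2 * n) = 0 ↔ (x = 0 ∨ x = a ∨ x = b) := by
  have hn0 : n ≠ 0 := by omega
  obtain ⟨a, ha, hfa⟩ := exists_friendshipDomPoly_eq_zero_Ioo_neg_two_neg_one hn0 hne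
  obtain ⟨b, hb, hfb⟩ := exists_friendshipDomPoly_eq_zero_Ioo_neg_one_zero hn hne
  have deriv_ne {x : ℝ} (hx : x ∈ Ioo (-2 : ℝ) 0) (hx0 : friendshipDomPoly n x = 0) :
      deriv (friendshipDomPoly n) x ≠ 0 :=
    left_ne_zero_of_mul (deriv_friendshipDomPoly_mul_one_add_neg hn0 hx hx0).ne
  refine ⟨a, b, ha, hb, hfa, deriv_ne ⟨ha.1, ha.2.trans (by norm_num)⟩ hfa, hfb,
    deriv_ne ⟨by linarith [hb.1], hb.2⟩ hfb, fun x => ⟨fun hx => ?_, ?_⟩⟩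
  · rcases eq_zero_or_mem_Ioo_of_friendshipDomPoly_eq_zero hn0 hne hx with rfl | hx' | hx'
    · exact Or.inl rfl
    · exact Or.inr (Or.inl
        (subsingleton_friendshipDomPoly_zeros_Ioo_neg_two_neg_one hn0 ⟨hx', hx⟩ ⟨ha, hfa⟩))
    · exact Or.inr (Or.inr
        (subsingleton_friendshipDomPoly_zeros_Ioo_neg_one_zero hn0 ⟨hx', hx⟩ ⟨hb, hfb⟩))
  · rintro (rfl | rfl | rfl)
    exacts [friendshipDomPoly_zero hn0, hfa, hfb]
end

section
/- Let n ≥ 2 be an even integer. Then there exists exactly one real number x in the open interval (-1,0) such that x^n (x+2)^n + x (1+x)^{2n} = 0. -/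
/-!
For `-1 < x < 0` and even `n`, `x ^ n = -x * (-x) ^ (n - 1)`, so `D(F_n, x) = 0` amounts to
`(-x) ^ (n - 1) * (x + 2) ^ n = (1 + x) ^ (2n)`. The difference of the two sides is `1` at `x = -1`
and `-1` at `x = 0`, which gives a root; and the quotient of the two sides,
`(-x) ^ (n - 1) * ((x + 2) / (1 + x) ^ 2) ^ n`, is strictly decreasing on `(-1, 0)`, since
`(x + 2) / (1 + x) ^ 2 = 1 / (1 + x) + 1 / (1 + x) ^ 2` is, which makes the root unique.
-/

open Set

namespace FriendshipGraph

def domPoly (n : ℕ) (x : ℝ) : ℝ := x ^ n * (x + 2) ^ n + x * (1 + x) ^ (2 * n)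

theorem domPoly_eq_neg_mul {n : ℕ} (hn : Even n) (hn0 : n ≠ 0) (x : ℝ) :
    domPoly n x = -x * ((-x) ^ (n - 1) * (x + 2) ^ n - (1 + x) ^ (2 * n)) := by
  have hxn : x ^ n = -x * (-x) ^ (n - 1) := by
    rw [← pow_succ', Nat.sub_add_cancel (Nat.one_le_iff_ne_zero.mpr hn0), hn.neg_pow]
  rw [domPoly, hxn]
  ring

theorem exists_neg_pow_mul_eq_in_Ioo {k m : ℕ} (hk : k ≠ 0) (hm : m ≠ 0) :
    ∃ x ∈ Ioo (-1 : ℝ) 0, (-x) ^ k * (x + 2) ^ m = (1 + x) ^ (2 * m) := by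
  have hcont : ContinuousOn (fun x : ℝ => (-x) ^ k * (x + 2) ^ m - (1 + x) ^ (2 * m))
      (Icc (-1) 0) := by
    fun_prop
  have hsign : (0 : ℝ) ∈ Ioo ((-0) ^ k * (0 + 2) ^ m - (1 + 0) ^ (2 * m))
      ((-(-1)) ^ k * (-1 + 2) ^ m - (1 + -1) ^ (2 * m)) := by
    norm_num [hk, hm]
  obtain ⟨x, hx, hx0⟩ := intermediate_value_Ioo' (by norm_num) hcont hsign
  exact ⟨x, hx, sub_eq_zero.mp hx0⟩

theorem add_two_div_one_add_sq_lt {x y : ℝ} (hx : -1 < x) (hxy : x < y) :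
    (y + 2) / (1 + y) ^ 2 < (x + 2) / (1 + x) ^ 2 := by
  have hx1 : 0 < 1 + x := by linarith
  have hy1 : 0 < 1 + y := by linarith
  rw [div_lt_div_iff₀ (by positivity) (by positivity)]
  nlinarith [mul_pos hx1 hy1, mul_pos (mul_pos hx1 hy1) (sub_pos.mpr hxy)]

theorem strictAntiOn_neg_pow_mul_add_two_div_one_add_sq_pow {k : ℕ} (hk : k ≠ 0) (m : ℕ) :
    StrictAntiOn (fun x : ℝ => (-x) ^ k * ((x + 2) / (1 + x) ^ 2) ^ m) (Ioo (-1) 0) := by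
  rintro x ⟨hx1, hx0⟩ y ⟨hy1, hy0⟩ hxy
  have hneg : (-y) ^ k < (-x) ^ k := pow_lt_pow_left₀ (by linarith) (by linarith) hk
  have hquot : ((y + 2) / (1 + y) ^ 2) ^ m ≤ ((x + 2) / (1 + x) ^ 2) ^ m :=
    pow_le_pow_left₀ (div_nonneg (by linarith) (sq_nonneg _))
      (add_two_div_one_add_sq_lt hx1 hxy).le m
  have hx2 : 0 < (x + 2) / (1 + x) ^ 2 := div_pos (by linarith) (pow_pos (by linarith) 2)
  exact mul_lt_mul_of_lt_of_le_of_nonneg_of_pos hneg hquot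
    (pow_nonneg (by linarith) k) (pow_pos hx2 m)

theorem eq_of_neg_pow_mul_eq {k m : ℕ} (hk : k ≠ 0) {x y : ℝ} (hx : x ∈ Ioo (-1 : ℝ) 0)
    (hy : y ∈ Ioo (-1 : ℝ) 0) (hxr : (-x) ^ k * (x + 2) ^ m = (1 + x) ^ (2 * m))
    (hyr : (-y) ^ k * (y + 2) ^ m = (1 + y) ^ (2 * m)) : x = y := by
  have hquot {z : ℝ} (hz : z ∈ Ioo (-1 : ℝ) 0) (hzr : (-z) ^ k * (z + 2) ^ m = (1 + z) ^ (2 * m)) :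
      (-z) ^ k * ((z + 2) / (1 + z) ^ 2) ^ m = 1 := by
    have : (1 + z) ^ (2 * m) ≠ 0 := pow_ne_zero _ (by linarith [hz.1])
    rw [div_pow, ← pow_mul, mul_div_assoc', hzr, div_self this]
  exact (strictAntiOn_neg_pow_mul_add_two_div_one_add_sq_pow hk m).injOn hx hy
    ((hquot hx hxr).trans (hquot hy hyr).symm)

end FriendshipGraph

open FriendshipGraph in
/-- For even `n ≥ 2`, there is exactly one `x ∈ (-1,0)` with
`x^n (x+2)^n + x (1+x)^(2n) = 0`. -/
theorem friendship_unique_root_in_Ioo_neg_one_zero (n : ℕ) (hn : 2 ≤ n) (hne : Even n) :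
    ∃! x : ℝ, x ∈ Set.Ioo (-1 : ℝ) 0 ∧ x ^ n * (x + 2) ^ n + x * (1 + x) ^ (2 * n) = 0 := by
  change ∃! x : ℝ, x ∈ Ioo (-1 : ℝ) 0 ∧ domPoly n x = 0
  have hk : n - 1 ≠ 0 := by omega
  have hroot {x : ℝ} (hx : x ∈ Ioo (-1 : ℝ) 0) :
      domPoly n x = 0 ↔ (-x) ^ (n - 1) * (x + 2) ^ n = (1 + x) ^ (2 * n) := by
    rw [domPoly_eq_neg_mul hne (by omega), mul_eq_zero, sub_eq_zero, neg_eq_zero,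
      or_iff_right hx.2.ne]
  obtain ⟨x, hx, hxr⟩ := exists_neg_pow_mul_eq_in_Ioo hk (by omega : n ≠ 0)
  refine ⟨x, ⟨hx, (hroot hx).mpr hxr⟩, fun y ⟨hy, hyr⟩ => ?_⟩
  exact eq_of_neg_pow_mul_eq hk hy hx ((hroot hy).mp hyr) hxr
end

section
/- Let n ≥ 1 be an integer and let t ∈ (0,1) satisfy (1−t)^{n−1} (1+t)^n = t^{2n}. Then t > 1/√2. -/
/-!
Write `n = m + 1`. Since `(1 - t)(1 + t) = 1 - t²`, the equation reads
`(1 + t)(1 - t²)^m = (t²)^(m+1)`. If `t ≤ 1/√2`, then `t² ≤ 1/2 ≤ 1 - t²` and `t² < 1 + t`,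
so the left side strictly exceeds the right one.
-/

lemma one_sub_pow_mul_one_add_pow_succ (t : ℝ) (m : ℕ) :
    (1 - t) ^ m * (1 + t) ^ (m + 1) = (1 + t) * (1 - t ^ 2) ^ m := by
  rw [show 1 - t ^ 2 = (1 - t) * (1 + t) by ring, mul_pow, pow_succ]
  ring

lemma sq_le_half_of_le_inv_sqrt_two {t : ℝ} (h0 : 0 ≤ t) (h : t ≤ 1 / Real.sqrt 2) :
    t ^ 2 ≤ 1 / 2 := by
  calc t ^ 2 ≤ (1 / Real.sqrt 2) ^ 2 := pow_le_pow_left₀ h0 h 2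
    _ = 1 / 2 := by rw [div_pow, one_pow, Real.sq_sqrt zero_le_two]

lemma sq_pow_succ_lt_of_sq_le_half {t : ℝ} (h0 : 0 ≤ t) (ht : t ^ 2 ≤ 1 / 2) (m : ℕ) :
    (t ^ 2) ^ (m + 1) < (1 + t) * (1 - t ^ 2) ^ m := by
  have hpos : 0 < (1 - t ^ 2) ^ m := pow_pos (by linarith) m
  calc (t ^ 2) ^ (m + 1) = t ^ 2 * (t ^ 2) ^ m := pow_succ' _ _
    _ ≤ t ^ 2 * (1 - t ^ 2) ^ m := by
      gcongr
      linarith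
    _ < (1 + t) * (1 - t ^ 2) ^ m := by
      gcongr
      linarith

/-- If `n ≥ 1` and `t ∈ (0,1)` satisfies `(1−t)^(n−1)(1+t)^n = t^(2n)`, then `t > 1/√2`. -/
theorem root_shift_gt_inv_sqrt_two (n : ℕ) (hn : 1 ≤ n) (t : ℝ)
    (ht : t ∈ Set.Ioo (0 : ℝ) 1)
    (heq : (1 - t) ^ (n - 1) * (1 + t) ^ n = t ^ (2 * n)) :
    1 / Real.sqrt 2 < t := by
  by_contra! h
  obtain ⟨m, rfl⟩ : ∃ m, n = m + 1 := ⟨n - 1, by omega⟩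
  rw [Nat.add_sub_cancel, one_sub_pow_mul_one_add_pow_succ, pow_mul] at heq
  exact (sq_pow_succ_lt_of_sq_le_half ht.1.le
    (sq_le_half_of_le_inv_sqrt_two ht.1.le h) m).ne' heq
end

section
/- Let n ≥ 1 be an integer and let s ∈ (0,1) satisfy (1−s)^n (1+s)^{n−1} = s^{2n}. Then s < 1/√2. -/
open Real

lemma one_sub_pow_succ_mul_one_add_pow (s : ℝ) (m : ℕ) :
    (1 - s) ^ (m + 1) * (1 + s) ^ m = (1 - s) * (1 - s ^ 2) ^ m := by
  rw [pow_succ, show 1 - s ^ 2 = (1 - s) * (1 + s) by ring, mul_pow]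
  ring

lemma half_le_sq_of_inv_sqrt_two_le {s : ℝ} (hs : 1 / √2 ≤ s) : 1 / 2 ≤ s ^ 2 := by
  have := pow_le_pow_left₀ (by positivity) hs 2
  rwa [div_pow, one_pow, sq_sqrt zero_le_two] at this

/-- Writing both sides as `(1 - s) (1 - s²)^m` and `s² (s²)^m`, each factor on the left is
dominated by the one on the right as soon as `s² ≥ 1/2`. -/
lemma one_sub_pow_succ_mul_one_add_pow_lt_of_inv_sqrt_two_le {s : ℝ} (hs : 1 / √2 ≤ s)
    (hs1 : s ≤ 1) (m : ℕ) : (1 - s) ^ (m + 1) * (1 + s) ^ m < s ^ (2 * (m + 1)) := by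
  have hsq := half_le_sq_of_inv_sqrt_two_le hs
  have hs0 : 0 < s := lt_of_lt_of_le (by positivity) hs
  calc (1 - s) ^ (m + 1) * (1 + s) ^ m = (1 - s) * (1 - s ^ 2) ^ m :=
        one_sub_pow_succ_mul_one_add_pow s m
    _ ≤ (1 - s) * (s ^ 2) ^ m := by
        gcongr <;> nlinarith
    _ < s ^ 2 * (s ^ 2) ^ m := by gcongr; nlinarith
    _ = s ^ (2 * (m + 1)) := by ring

/-- If `n ≥ 1` and `s ∈ (0,1)` satisfies `(1−s)^n (1+s)^(n−1) = s^(2n)`, then `s < 1/√2`. -/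
theorem root_shift_lt_inv_sqrt_two (n : ℕ) (hn : 1 ≤ n) (s : ℝ)
    (hs : s ∈ Set.Ioo (0 : ℝ) 1)
    (heq : (1 - s) ^ n * (1 + s) ^ (n - 1) = s ^ (2 * n)) :
    s < 1 / Real.sqrt 2 := by
  obtain ⟨m, rfl⟩ := Nat.exists_eq_add_of_le' hn
  rw [Nat.add_sub_cancel] at heq
  by_contra! h
  exact (one_sub_pow_succ_mul_one_add_pow_lt_of_inv_sqrt_two_le h hs.2.le m).ne heq
end

section
/- Let n ≥ 2 be an even integer, let t_n ∈ (0,1) satisfy (1−t_n)^{n−1}(1+t_n)^n = t_n^{2n}, and let t_{n+2} ∈ (0,1) satisfy (1−t_{n+2})^{n+1}(1+t_{n+2})^{n+2} = t_{n+2}^{2(n+2)}. Then t_{n+2} < t_n. Similarly, if s_n ∈ (0,1) satisfies (1−s_n)^n(1+s_n)^{n−1} = s_n^{2n} and s_{n+2} ∈ (0,1) satisfies (1−s_{n+2})^{n+2}(1+s_{n+2})^{n+1} = s_{n+2}^{2(n+2)}, then s_{n+2} > s_n. -/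
/-!
Dividing by `t ^ (2n)` and writing `u = 1 / t > 1`, both equations take the form
`u (u - 1) ^ a (u + 1) ^ b = 1` with an increasing left-hand side. Passing from `n` to `n + 2`
multiplies the left-hand side by `(u ^ 2 - 1) ^ 2`, and the equation at level `n` forces
`u ^ 2 - 1 < 1` at `u = 1 / t_n` but `u ^ 2 - 1 > 1` at `u = 1 / s_n`; monotonicity then places
`t_{n+2}` below `t_n` and `s_{n+2}` above `s_n`.
-/

open Set

noncomputable def rootProfile (a b : ℕ) (t : ℝ) : ℝ :=
  t⁻¹ * (t⁻¹ - 1) ^ a * (t⁻¹ + 1) ^ b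

section rootProfile

variable {a b k : ℕ} {t : ℝ}

theorem rootProfile_eq_one_iff (ht : t ≠ 0) :
    rootProfile a b t = 1 ↔ (1 - t) ^ a * (1 + t) ^ b = t ^ (a + b + 1) := by
  have key : rootProfile a b t * t ^ (a + b + 1) = (1 - t) ^ a * (1 + t) ^ b := by
    simp only [rootProfile, pow_add, pow_one]
    calc t⁻¹ * (t⁻¹ - 1) ^ a * (t⁻¹ + 1) ^ b * (t ^ a * t ^ b * t)
        = (t * t⁻¹) * ((t⁻¹ - 1) * t) ^ a * ((t⁻¹ + 1) * t) ^ b := by rw [mul_pow, mul_pow]; ring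
      _ = (1 - t) ^ a * (1 + t) ^ b := by
        rw [mul_inv_cancel₀ ht, sub_mul, add_mul, inv_mul_cancel₀ ht]; ring
  rw [← key, mul_eq_right₀ (pow_ne_zero _ ht)]

theorem antitoneOn_rootProfile (a b : ℕ) : AntitoneOn (rootProfile a b) (Ioo 0 1) := by
  intro s ⟨hs0, _⟩ t ⟨_, ht1⟩ hst
  have hinv : t⁻¹ ≤ s⁻¹ := inv_anti₀ hs0 hst
  have ht : 1 ≤ t⁻¹ := one_le_inv₀ (by linarith) |>.2 ht1.le
  unfold rootProfile
  gcongr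
  bound

theorem rootProfile_add_two (t : ℝ) :
    rootProfile (a + 2) (b + 2) t = (t⁻¹ ^ 2 - 1) ^ 2 * rootProfile a b t := by
  unfold rootProfile; ring

theorem rootProfile_add_two_lt_one (ht : t ∈ Ioo 0 1) (hk : k ≠ 0)
    (h : rootProfile k (k + 1) t = 1) : rootProfile (k + 2) (k + 3) t < 1 := by
  set u := t⁻¹
  have hu1 : 1 < u := one_lt_inv₀ ht.1 |>.2 ht.2
  have hfactor : (u ^ 2 - 1) ^ k * (u * (u + 1)) = 1 := by
    calc (u ^ 2 - 1) ^ k * (u * (u + 1)) = u * ((u - 1) * (u + 1)) ^ k * (u + 1) := by ring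
      _ = u * (u - 1) ^ k * (u + 1) ^ (k + 1) := by rw [mul_pow]; ring
      _ = 1 := h
  have hpow : (u ^ 2 - 1) ^ k < 1 := by
    by_contra! hge
    nlinarith
  have hsq : u ^ 2 - 1 < 1 := (pow_lt_one_iff_of_nonneg (by nlinarith) hk).1 hpow
  rw [rootProfile_add_two, h, mul_one]
  exact pow_lt_one₀ (by nlinarith) hsq two_ne_zero

theorem one_lt_rootProfile_add_two (ht : t ∈ Ioo 0 1)
    (h : rootProfile (k + 1) k t = 1) : 1 < rootProfile (k + 3) (k + 2) t := by
  set u := t⁻¹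
  have hu1 : 1 < u := one_lt_inv₀ ht.1 |>.2 ht.2
  have hfactor : (u ^ 2 - 1) ^ k * (u * (u - 1)) = 1 := by
    calc (u ^ 2 - 1) ^ k * (u * (u - 1)) = u * ((u - 1) * (u + 1)) ^ k * (u - 1) := by ring
      _ = u * (u - 1) ^ (k + 1) * (u + 1) ^ k := by rw [mul_pow]; ring
      _ = 1 := h
  -- `u ^ 2 ≤ 2` would give `u (u - 1) < 1`, too small for the product to reach `1`
  have hsq : 1 < u ^ 2 - 1 := by
    by_contra! hle
    have hsmall : u * (u - 1) < 1 := by nlinarith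
    have hpow : (u ^ 2 - 1) ^ k ≤ 1 := pow_le_one₀ (by nlinarith) hle
    have : (u ^ 2 - 1) ^ k * (u * (u - 1)) < 1 :=
      calc (u ^ 2 - 1) ^ k * (u * (u - 1)) ≤ 1 * (u * (u - 1)) :=
            mul_le_mul_of_nonneg_right hpow (by nlinarith)
        _ < 1 := by rwa [one_mul]
    linarith
  rw [rootProfile_add_two, h, mul_one]
  exact one_lt_pow₀ hsq two_ne_zero

end rootProfile

theorem friendship_root_parameters_monotone_general (n : ℕ) (hn : 2 ≤ n)
    (tn tn2 sn sn2 : ℝ)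
    (htn : tn ∈ Set.Ioo (0 : ℝ) 1)
    (htn_eq : (1 - tn) ^ (n - 1) * (1 + tn) ^ n = tn ^ (2 * n))
    (htn2 : tn2 ∈ Set.Ioo (0 : ℝ) 1)
    (htn2_eq : (1 - tn2) ^ (n + 1) * (1 + tn2) ^ (n + 2) = tn2 ^ (2 * (n + 2)))
    (hsn : sn ∈ Set.Ioo (0 : ℝ) 1)
    (hsn_eq : (1 - sn) ^ n * (1 + sn) ^ (n - 1) = sn ^ (2 * n))
    (hsn2 : sn2 ∈ Set.Ioo (0 : ℝ) 1)
    (hsn2_eq : (1 - sn2) ^ (n + 2) * (1 + sn2) ^ (n + 1) = sn2 ^ (2 * (n + 2))) :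
    tn2 < tn ∧ sn < sn2 := by
  obtain ⟨k, rfl⟩ : ∃ k, n = k + 1 := ⟨n - 1, by omega⟩
  rw [Nat.add_sub_cancel] at htn_eq hsn_eq
  have ht : rootProfile k (k + 1) tn = 1 := (rootProfile_eq_one_iff htn.1.ne').2 <| by
    rwa [show k + (k + 1) + 1 = 2 * (k + 1) by ring]
  have ht2 : rootProfile (k + 2) (k + 3) tn2 = 1 := (rootProfile_eq_one_iff htn2.1.ne').2 <| by
    rwa [show k + 2 + (k + 3) + 1 = 2 * (k + 1 + 2) by ring]
  have hs : rootProfile (k + 1) k sn = 1 := (rootProfile_eq_one_iff hsn.1.ne').2 <| by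
    rwa [show k + 1 + k + 1 = 2 * (k + 1) by ring]
  have hs2 : rootProfile (k + 3) (k + 2) sn2 = 1 := (rootProfile_eq_one_iff hsn2.1.ne').2 <| by
    rwa [show k + 3 + (k + 2) + 1 = 2 * (k + 1 + 2) by ring]
  constructor
  · refine (antitoneOn_rootProfile (k + 2) (k + 3)).reflect_lt htn htn2 ?_
    rw [ht2]
    exact rootProfile_add_two_lt_one htn (by omega) ht
  · refine (antitoneOn_rootProfile (k + 3) (k + 2)).reflect_lt hsn2 hsn ?_
    rw [hs2]
    exact one_lt_rootProfile_add_two hsn hs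

/-- Monotonicity of the shift parameters of the nonzero real zeros of `D(F_n,x)` for even `n`:
if `t_n, t_{n+2} ∈ (0,1)` satisfy the respective identities, then `t_{n+2} < t_n`, and
if `s_n, s_{n+2} ∈ (0,1)` satisfy the respective identities, then `s_{n+2} > s_n`. -/
theorem friendship_root_parameters_monotone (n : ℕ) (hn : 2 ≤ n) (hne : Even n)
    (tn tn2 sn sn2 : ℝ)
    (htn : tn ∈ Set.Ioo (0 : ℝ) 1)
    (htn_eq : (1 - tn) ^ (n - 1) * (1 + tn) ^ n = tn ^ (2 * n))
    (htn2 : tn2 ∈ Set.Ioo (0 : ℝ) 1)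
    (htn2_eq : (1 - tn2) ^ (n + 1) * (1 + tn2) ^ (n + 2) = tn2 ^ (2 * (n + 2)))
    (hsn : sn ∈ Set.Ioo (0 : ℝ) 1)
    (hsn_eq : (1 - sn) ^ n * (1 + sn) ^ (n - 1) = sn ^ (2 * n))
    (hsn2 : sn2 ∈ Set.Ioo (0 : ℝ) 1)
    (hsn2_eq : (1 - sn2) ^ (n + 2) * (1 + sn2) ^ (n + 1) = sn2 ^ (2 * (n + 2))) :
    tn2 < tn ∧ sn < sn2 :=
  friendship_root_parameters_monotone_general n hn tn tn2 sn sn2 htn htn_eq htn2 htn2_eq hsn hsn_eq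
    hsn2 hsn2_eq
end

section
/- For each even integer n ≥ 2, let t_n denote the unique t ∈ (0,1) with (1−t)^{n−1}(1+t)^n = t^{2n} and let s_n denote the unique s ∈ (0,1) with (1−s)^n(1+s)^{n−1} = s^{2n}. Then, along the subsequence of even integers n = 2, 4, 6, …, the sequence t_n is strictly decreasing and converges to 1/√2, and the sequence s_n is strictly increasing and converges to 1/√2. Equivalently, the zeros x_n^+ = t_n − 1 of D(F_n,x) in (−1,0) decrease to −1 + 1/√2, and the zeros x_n^- = −1 − s_n of D(F_n,x) in (−2,−1) decrease to −1 − 1/√2. -/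
/-!
With `u y = y⁻² - 1`, `w₊ y = y⁻² + y⁻¹` and `w₋ y = y⁻² - y⁻¹`, dividing the equations by
`y^{2n}` turns them into `u(t)^{n-1} w₊(t) = 1` and `u(s)^{n-1} w₋(s) = 1`. All three functions
are positive and decreasing on `(0,1)`, and `u(1/√2) = 1`. Since `w₊(1/√2) > 1 > w₋(1/√2)`, every
`t_n` lies above `1/√2`, where `u < 1`, and every `s_n` below it, where `u > 1`. So raising the
exponent pushes `u^m w₊` below `1` at `t_n` and `u^m w₋` above `1` at `s_n`, which moves the roots
down and up respectively; and for fixed `c ≠ 1/√2` the powers `u(c)^m` tend to `0` or `∞`, which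
squeezes the roots to `1/√2`.
-/

open Filter Set Topology

theorem antitoneOn_pow_mul {α : Type*} [Preorder α] {s : Set α} {u w : α → ℝ}
    (hu : AntitoneOn u s) (hu0 : ∀ y ∈ s, 0 ≤ u y) (hw : AntitoneOn w s)
    (hw0 : ∀ y ∈ s, 0 ≤ w y) (m : ℕ) : AntitoneOn (fun y => u y ^ m * w y) s :=
  fun y hy z hz hyz => mul_le_mul (pow_le_pow_left₀ (hu0 z hz) (hu hy hz hyz) m) (hw hy hz hyz)
    (hw0 z hz) (pow_nonneg (hu0 y hy) m)

section PowMulRoots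

variable {u w : ℝ → ℝ} {a b r : ℝ} {e : ℕ → ℕ} {y : ℕ → ℝ}

theorem strictAnti_and_tendsto_of_pow_mul_eq_one (hu : StrictAntiOn u (Ioo a b))
    (hu0 : ∀ x ∈ Ioo a b, 0 ≤ u x) (hw : AntitoneOn w (Ioo a b)) (hw0 : ∀ x ∈ Ioo a b, 0 ≤ w x)
    (hr : r ∈ Ioo a b) (hur : u r = 1) (hwr : 1 < w r) (he : StrictMono e)
    (hy : ∀ k, y k ∈ Ioo a b ∧ u (y k) ^ e k * w (y k) = 1) :
    StrictAnti y ∧ Tendsto y atTop (𝓝 r) := by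
  have hG := antitoneOn_pow_mul hu.antitoneOn hu0 hw hw0
  have hr_lt (k : ℕ) : r < y k :=
    (hG (e k)).reflect_lt (hy k).1 hr (by simpa [hur, (hy k).2] using hwr)
  have hu_lt {c : ℝ} (hc : c ∈ Ioo a b) (hrc : r < c) : u c < 1 := hur ▸ hu hr hc hrc
  refine ⟨strictAnti_nat_of_succ_lt fun k => ?_,
    tendsto_order.2 ⟨fun c hc => .of_forall fun k => hc.trans (hr_lt k), fun c hc => ?_⟩⟩
  · obtain ⟨d, hd⟩ := Nat.exists_eq_add_of_lt (he k.lt_succ_self)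
    have hroot_succ : u (y k) ^ e (k + 1) * w (y k) < 1 := calc
      u (y k) ^ e (k + 1) * w (y k) = u (y k) ^ (d + 1) * (u (y k) ^ e k * w (y k)) := by
        rw [hd]; ring
      _ < 1 := by
        rw [(hy k).2, mul_one]
        exact pow_lt_one₀ (hu0 _ (hy k).1) (hu_lt (hy k).1 (hr_lt k)) d.succ_ne_zero
    exact (hG _).reflect_lt (hy k).1 (hy (k + 1)).1 ((hy (k + 1)).2 ▸ hroot_succ)
  · obtain ⟨c', hrc', hc'⟩ := exists_between (lt_min hc hr.2)
    have hc'I : c' ∈ Ioo a b := ⟨hr.1.trans hrc', hc'.trans_le (min_le_right _ _)⟩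
    have hlim : Tendsto (fun k => u c' ^ e k * w c') atTop (𝓝 0) := by
      simpa using ((tendsto_pow_atTop_nhds_zero_of_lt_one (hu0 c' hc'I) (hu_lt hc'I hrc')).comp
        he.tendsto_atTop).mul_const (w c')
    filter_upwards [hlim.eventually_lt_const zero_lt_one] with k hk
    exact ((hG (e k)).reflect_lt hc'I (hy k).1 (by rwa [(hy k).2])).trans_le
      (hc'.le.trans (min_le_left _ _))

theorem strictMono_and_tendsto_of_pow_mul_eq_one (hu : StrictAntiOn u (Ioo a b))
    (hu0 : ∀ x ∈ Ioo a b, 0 ≤ u x) (hw : AntitoneOn w (Ioo a b)) (hw0 : ∀ x ∈ Ioo a b, 0 < w x)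
    (hr : r ∈ Ioo a b) (hur : u r = 1) (hwr : w r < 1) (he : StrictMono e)
    (hy : ∀ k, y k ∈ Ioo a b ∧ u (y k) ^ e k * w (y k) = 1) :
    StrictMono y ∧ Tendsto y atTop (𝓝 r) := by
  have hG := antitoneOn_pow_mul hu.antitoneOn hu0 hw fun x hx => (hw0 x hx).le
  have hlt_r (k : ℕ) : y k < r :=
    (hG (e k)).reflect_lt hr (hy k).1 (by simpa [hur, (hy k).2] using hwr)
  have hu_gt {c : ℝ} (hc : c ∈ Ioo a b) (hcr : c < r) : 1 < u c := hur ▸ hu hc hr hcr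
  refine ⟨strictMono_nat_of_lt_succ fun k => ?_,
    tendsto_order.2 ⟨fun c hc => ?_, fun c hc => .of_forall fun k => (hlt_r k).trans hc⟩⟩
  · obtain ⟨d, hd⟩ := Nat.exists_eq_add_of_lt (he k.lt_succ_self)
    have hroot_succ : 1 < u (y k) ^ e (k + 1) * w (y k) := calc
      1 < u (y k) ^ (d + 1) * (u (y k) ^ e k * w (y k)) := by
        rw [(hy k).2, mul_one]
        exact one_lt_pow₀ (hu_gt (hy k).1 (hlt_r k)) d.succ_ne_zero
      _ = u (y k) ^ e (k + 1) * w (y k) := by rw [hd]; ring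
    exact (hG _).reflect_lt (hy (k + 1)).1 (hy k).1 ((hy (k + 1)).2 ▸ hroot_succ)
  · obtain ⟨c', hc', hc'r⟩ := exists_between (max_lt hc hr.1)
    have hc'I : c' ∈ Ioo a b := ⟨(le_max_right _ _).trans_lt hc', hc'r.trans hr.2⟩
    have hlim : Tendsto (fun k => u c' ^ e k * w c') atTop atTop :=
      ((tendsto_pow_atTop_atTop_of_one_lt (hu_gt hc'I hc'r)).comp he.tendsto_atTop).atTop_mul_const
        (hw0 c' hc'I)
    filter_upwards [hlim.eventually_gt_atTop 1] with k hk
    exact (le_max_left _ _).trans_lt (hc'.trans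
      ((hG (e k)).reflect_lt (hy k).1 hc'I (by rwa [(hy k).2])))

end PowMulRoots

theorem strictAntiOn_inv_sq_sub_one : StrictAntiOn (fun y : ℝ => y⁻¹ ^ 2 - 1) (Ioi 0) :=
  fun y hy z hz hyz => by
    have := inv_strictAntiOn hy hz hyz
    have := inv_pos.2 (mem_Ioi.1 hz)
    dsimp only; nlinarith

theorem antitoneOn_inv_sq_add_inv : AntitoneOn (fun y : ℝ => y⁻¹ ^ 2 + y⁻¹) (Ioi 0) :=
  fun y hy z hz hyz => by
    have := inv_anti₀ (mem_Ioi.1 hy) hyz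
    have := inv_pos.2 (mem_Ioi.1 hz)
    dsimp only; nlinarith

theorem antitoneOn_inv_sq_sub_inv : AntitoneOn (fun y : ℝ => y⁻¹ ^ 2 - y⁻¹) (Ioc 0 2) :=
  fun y hy z hz hyz => by
    have := inv_anti₀ hy.1 hyz
    have : 2⁻¹ ≤ z⁻¹ := inv_anti₀ hz.1 hz.2
    dsimp only; nlinarith

theorem inv_sq_sub_one_pow_mul_add_inv {y : ℝ} (hy : y ≠ 0) (m : ℕ) :
    (y⁻¹ ^ 2 - 1) ^ m * (y⁻¹ ^ 2 + y⁻¹) = (1 - y) ^ m * (1 + y) ^ (m + 1) / y ^ (2 * m + 2) := by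
  have hu : y⁻¹ ^ 2 - 1 = (1 - y) * (1 + y) / y ^ 2 := by field_simp; ring
  have hw : y⁻¹ ^ 2 + y⁻¹ = (1 + y) / y ^ 2 := by field_simp
  rw [hu, hw, div_pow, mul_pow]
  field_simp
  ring

theorem inv_sq_sub_one_pow_mul_sub_inv {y : ℝ} (hy : y ≠ 0) (m : ℕ) :
    (y⁻¹ ^ 2 - 1) ^ m * (y⁻¹ ^ 2 - y⁻¹) = (1 - y) ^ (m + 1) * (1 + y) ^ m / y ^ (2 * m + 2) := by
  have hu : y⁻¹ ^ 2 - 1 = (1 - y) * (1 + y) / y ^ 2 := by field_simp; ring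
  have hw : y⁻¹ ^ 2 - y⁻¹ = (1 - y) / y ^ 2 := by field_simp
  rw [hu, hw, div_pow, mul_pow]
  field_simp
  ring

theorem one_div_sqrt_two_mem_Ioo : 1 / √2 ∈ Ioo (0 : ℝ) 1 :=
  ⟨by positivity, (div_lt_one (by positivity)).2 Real.one_lt_sqrt_two⟩

section FriendshipRoots

variable {e : ℕ → ℕ} {y : ℕ → ℝ}

theorem strictAnti_and_tendsto_of_one_sub_pow_mul_one_add_pow_succ (he : StrictMono e)
    (hy : ∀ k, y k ∈ Ioo (0 : ℝ) 1 ∧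
      (1 - y k) ^ e k * (1 + y k) ^ (e k + 1) = y k ^ (2 * e k + 2)) :
    StrictAnti y ∧ Tendsto y atTop (𝓝 (1 / √2)) := by
  refine strictAnti_and_tendsto_of_pow_mul_eq_one
    (strictAntiOn_inv_sq_sub_one.mono Ioo_subset_Ioi_self) (fun x hx => ?_)
    (antitoneOn_inv_sq_add_inv.mono Ioo_subset_Ioi_self) (fun x hx => ?_)
    one_div_sqrt_two_mem_Ioo ?_ ?_ he fun k => ⟨(hy k).1, ?_⟩
  · nlinarith [(one_lt_inv₀ hx.1).2 hx.2]
  · have := hx.1; positivity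
  · rw [one_div, inv_inv, Real.sq_sqrt zero_le_two]; norm_num
  · rw [one_div, inv_inv, Real.sq_sqrt zero_le_two]; linarith [Real.sqrt_nonneg 2]
  · rw [inv_sq_sub_one_pow_mul_add_inv (hy k).1.1.ne', (hy k).2,
      div_self (pow_ne_zero _ (hy k).1.1.ne')]

theorem strictMono_and_tendsto_of_one_sub_pow_succ_mul_one_add_pow (he : StrictMono e)
    (hy : ∀ k, y k ∈ Ioo (0 : ℝ) 1 ∧
      (1 - y k) ^ (e k + 1) * (1 + y k) ^ e k = y k ^ (2 * e k + 2)) :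
    StrictMono y ∧ Tendsto y atTop (𝓝 (1 / √2)) := by
  refine strictMono_and_tendsto_of_pow_mul_eq_one
    (strictAntiOn_inv_sq_sub_one.mono Ioo_subset_Ioi_self) (fun x hx => ?_)
    (antitoneOn_inv_sq_sub_inv.mono fun x hx => ⟨hx.1, hx.2.le.trans one_le_two⟩)
    (fun x hx => ?_) one_div_sqrt_two_mem_Ioo ?_ ?_ he fun k => ⟨(hy k).1, ?_⟩
  · nlinarith [(one_lt_inv₀ hx.1).2 hx.2]
  · nlinarith [(one_lt_inv₀ hx.1).2 hx.2]
  · rw [one_div, inv_inv, Real.sq_sqrt zero_le_two]; norm_num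
  · rw [one_div, inv_inv, Real.sq_sqrt zero_le_two]; linarith [Real.one_lt_sqrt_two]
  · rw [inv_sq_sub_one_pow_mul_sub_inv (hy k).1.1.ne', (hy k).2,
      div_self (pow_ne_zero _ (hy k).1.1.ne')]

end FriendshipRoots

/-- Along even integers `n = 2k`, the unique solutions `t_k ∈ (0,1)` of
`(1−t)^(2k−1)(1+t)^(2k) = t^(4k)` are strictly decreasing with limit `1/√2`, and the unique
solutions `s_k ∈ (0,1)` of `(1−s)^(2k)(1+s)^(2k−1) = s^(4k)` are strictly increasing with limit
`1/√2`. Equivalently, `x_k^+ = t_k − 1` decreases to `−1 + 1/√2` and `x_k^- = −1 − s_k`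
decreases to `−1 − 1/√2`. -/
theorem friendship_root_parameters_converge (t s : ℕ → ℝ)
    (ht : ∀ k : ℕ, 1 ≤ k → t k ∈ Set.Ioo (0 : ℝ) 1 ∧
      (1 - t k) ^ (2 * k - 1) * (1 + t k) ^ (2 * k) = (t k) ^ (4 * k))
    (hs : ∀ k : ℕ, 1 ≤ k → s k ∈ Set.Ioo (0 : ℝ) 1 ∧
      (1 - s k) ^ (2 * k) * (1 + s k) ^ (2 * k - 1) = (s k) ^ (4 * k)) :
    (∀ k : ℕ, 1 ≤ k → t (k + 1) < t k) ∧
    Tendsto t atTop (nhds (1 / Real.sqrt 2)) ∧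
    (∀ k : ℕ, 1 ≤ k → s k < s (k + 1)) ∧
    Tendsto s atTop (nhds (1 / Real.sqrt 2)) ∧
    Tendsto (fun k => t k - 1) atTop (nhds (-1 + 1 / Real.sqrt 2)) ∧
    Tendsto (fun k => -1 - s k) atTop (nhds (-1 - 1 / Real.sqrt 2)) := by
  have hodd : StrictMono fun k : ℕ => 2 * k + 1 := strictMono_nat_of_lt_succ fun k => by omega
  have hexp (k : ℕ) : 2 * (k + 1) = 2 * k + 1 + 1 ∧ 4 * (k + 1) = 2 * (2 * k + 1) + 2 := by omega
  obtain ⟨ht_anti, ht_lim⟩ := strictAnti_and_tendsto_of_one_sub_pow_mul_one_add_pow_succ hodd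
    fun k => by simpa only [(hexp k).1, (hexp k).2, Nat.add_sub_cancel] using ht (k + 1) k.succ_pos
  obtain ⟨hs_mono, hs_lim⟩ := strictMono_and_tendsto_of_one_sub_pow_succ_mul_one_add_pow hodd
    fun k => by simpa only [(hexp k).1, (hexp k).2, Nat.add_sub_cancel] using hs (k + 1) k.succ_pos
  replace ht_lim := (tendsto_add_atTop_iff_nat 1).1 ht_lim
  replace hs_lim := (tendsto_add_atTop_iff_nat 1).1 hs_lim
  refine ⟨fun k hk => ?_, ht_lim, fun k hk => ?_, hs_lim, ?_, tendsto_const_nhds.sub hs_lim⟩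
  · obtain ⟨j, rfl⟩ := Nat.exists_eq_add_of_le' hk
    exact ht_anti j.lt_succ_self
  · obtain ⟨j, rfl⟩ := Nat.exists_eq_add_of_le' hk
    exact hs_mono j.lt_succ_self
  · simpa only [neg_add_eq_sub] using ht_lim.sub_const 1
end

section
/- Let n ≥ 1 be an integer and let z be a nonzero complex number with z^n (z+2)^n + z (1+z)^{2n} = 0. If |z| > 1, then (|z| − 1)^2 · log|z| ≤ n. -/
/-!
With `w = z (z + 2)` we have `w + 1 = (1 + z)²`, so the root equation reads
`wⁿ = -z (w + 1)ⁿ`. Taking norms, `‖z‖ = (‖w‖ / ‖w + 1‖)ⁿ ≤ (1 + 1/‖w + 1‖)ⁿ`, and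
`‖w + 1‖ = ‖1 + z‖² ≥ (‖z‖ - 1)²`; finally `log (1 + x) ≤ x`.
-/

theorem norm_le_one_add_inv_pow_of_pow_eq_neg_mul {𝕜 : Type*} [NormedField 𝕜] {n : ℕ}
    {z w : 𝕜} (h : w ^ n = -(z * (w + 1) ^ n)) (hw : w + 1 ≠ 0) :
    ‖z‖ ≤ (1 + ‖w + 1‖⁻¹) ^ n := by
  have hT : 0 < ‖w + 1‖ := norm_pos_iff.mpr hw
  have hnorm : ‖z‖ * ‖w + 1‖ ^ n = ‖w‖ ^ n := by
    rw [← norm_pow w, h, norm_neg, norm_mul, norm_pow]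
  have hw_le : ‖w‖ ≤ ‖w + 1‖ + 1 := by
    simpa using norm_sub_le (w + 1) 1
  calc ‖z‖ = ‖w‖ ^ n / ‖w + 1‖ ^ n := by rw [← hnorm, mul_div_cancel_right₀ _ (by positivity)]
    _ ≤ (‖w + 1‖ + 1) ^ n / ‖w + 1‖ ^ n := by gcongr
    _ = (1 + ‖w + 1‖⁻¹) ^ n := by rw [← div_pow]; field_simp

theorem Real.mul_log_le_of_le_one_add_inv_pow {s r : ℝ} {n : ℕ} (hs : 0 < s) (hr : 0 < r)
    (h : r ≤ (1 + s⁻¹) ^ n) : s * Real.log r ≤ n := by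
  have hlog : Real.log (1 + s⁻¹) ≤ s⁻¹ := by
    linarith [Real.log_le_sub_one_of_pos (x := 1 + s⁻¹) (by positivity)]
  calc s * Real.log r ≤ s * (n * Real.log (1 + s⁻¹)) := by
        gcongr
        rw [← Real.log_pow]
        exact Real.log_le_log hr h
    _ ≤ s * (n * s⁻¹) := by gcongr
    _ = n := by field_simp

theorem sq_norm_sub_one_le_norm_one_add_sq (z : ℂ) : (‖z‖ - 1) ^ 2 ≤ ‖(1 + z) ^ 2‖ := by
  rw [norm_pow, ← sq_abs]
  gcongr
  simpa [add_comm] using abs_norm_sub_norm_le z (-1)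

theorem friendship_root_modulus_implicit_bound_general (n : ℕ) (z : ℂ)
    (hroot : z ^ n * (z + 2) ^ n + z * (1 + z) ^ (2 * n) = 0)
    (habs : 1 < ‖z‖) :
    (‖z‖ - 1) ^ 2 * Real.log (‖z‖) ≤ n := by
  have hs : 0 < (‖z‖ - 1) ^ 2 := pow_pos (by linarith) 2
  have hw1 : z * (z + 2) + 1 = (1 + z) ^ 2 := by ring
  have hw : (z * (z + 2)) ^ n = -(z * (z * (z + 2) + 1) ^ n) := by
    rw [hw1, ← pow_mul, mul_comm 2 n, mul_pow]
    linear_combination hroot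
  have hT := sq_norm_sub_one_le_norm_one_add_sq z
  have hz_le := norm_le_one_add_inv_pow_of_pow_eq_neg_mul hw
    (by rw [hw1]; exact norm_pos_iff.mp (hs.trans_le hT))
  rw [hw1] at hz_le
  refine Real.mul_log_le_of_le_one_add_inv_pow hs (by linarith) (hz_le.trans ?_)
  gcongr

/-- If `z ≠ 0` is a root of `z^n (z+2)^n + z (1+z)^(2n)` with `|z| > 1`, then
`(|z| − 1)^2 · log|z| ≤ n`. -/
theorem friendship_root_modulus_implicit_bound (n : ℕ) (hn : 1 ≤ n) (z : ℂ) (hz : z ≠ 0)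
    (hroot : z ^ n * (z + 2) ^ n + z * (1 + z) ^ (2 * n) = 0)
    (habs : 1 < ‖z‖) :
    (‖z‖ - 1) ^ 2 * Real.log (‖z‖) ≤ n :=
  friendship_root_modulus_implicit_bound_general n z hroot habs
end

section
/- Let n ≥ 1 be an integer and let z be a complex number with z^n (z+2)^n + z (1+z)^{2n} = 0. Then |z| ≤ 1 + √(n / log 2). -/
/-!
Put `w = 1 + z`. Since `w ^ 2 - 1 = z (z + 2)`, the equation reads
`(w ^ 2 - 1) ^ n = -z w ^ (2n)`, so `‖z‖ ‖w‖ ^ (2n) ≤ (‖w‖ ^ 2 + 1) ^ n` and hence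
`‖z‖ ≤ (1 + 1 / ‖w‖ ^ 2) ^ n ≤ exp (n / ‖w‖ ^ 2)`. If `‖z‖ > 1 + √(n / log 2)`, then
`‖w‖ ≥ ‖z‖ - 1 > √(n / log 2)`, so this gives `‖z‖ < 2`, which is impossible because
`√(n / log 2) ≥ 1`.
-/

theorem friendship_root_identity {R : Type*} [CommRing R] {n : ℕ} {z : R}
    (hroot : z ^ n * (z + 2) ^ n + z * (1 + z) ^ (2 * n) = 0) :
    ((1 + z) ^ 2 - 1) ^ n = -(z * (1 + z) ^ (2 * n)) := by
  rw [show (1 + z) ^ 2 - 1 = z * (z + 2) by ring, mul_pow]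
  exact eq_neg_of_add_eq_zero_left hroot

theorem norm_mul_norm_one_add_pow_le_of_friendship_root {𝕜 : Type*} [NormedField 𝕜] {n : ℕ}
    {z : 𝕜} (hroot : z ^ n * (z + 2) ^ n + z * (1 + z) ^ (2 * n) = 0) :
    ‖z‖ * ‖1 + z‖ ^ (2 * n) ≤ (‖1 + z‖ ^ 2 + 1) ^ n := by
  calc ‖z‖ * ‖1 + z‖ ^ (2 * n) = ‖(1 + z) ^ 2 - 1‖ ^ n := by
        rw [← norm_pow _ n, friendship_root_identity hroot, norm_neg, norm_mul, norm_pow]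
    _ ≤ (‖1 + z‖ ^ 2 + 1) ^ n := by
        gcongr
        have h := norm_sub_le ((1 + z) ^ 2) 1
        rwa [norm_pow, norm_one] at h

theorem sq_add_one_pow_le_pow_mul_exp {u : ℝ} (hu : u ≠ 0) (n : ℕ) :
    (u ^ 2 + 1) ^ n ≤ u ^ (2 * n) * Real.exp (n / u ^ 2) := by
  calc (u ^ 2 + 1) ^ n = (u ^ 2) ^ n * (1 / u ^ 2 + 1) ^ n := by
        rw [← mul_pow]
        field_simp
        ring
    _ ≤ (u ^ 2) ^ n * Real.exp (1 / u ^ 2) ^ n := by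
        gcongr
        exact Real.add_one_le_exp _
    _ = u ^ (2 * n) * Real.exp (n / u ^ 2) := by
        rw [pow_mul, ← Real.exp_nat_mul, mul_one_div]

theorem norm_le_exp_of_friendship_root {𝕜 : Type*} [NormedField 𝕜] {n : ℕ} {z : 𝕜}
    (hroot : z ^ n * (z + 2) ^ n + z * (1 + z) ^ (2 * n) = 0) (hz : 1 + z ≠ 0) :
    ‖z‖ ≤ Real.exp (n / ‖1 + z‖ ^ 2) := by
  have hpos : 0 < ‖1 + z‖ ^ (2 * n) := by positivity
  refine le_of_mul_le_mul_right ?_ hpos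
  calc ‖z‖ * ‖1 + z‖ ^ (2 * n) ≤ (‖1 + z‖ ^ 2 + 1) ^ n :=
        norm_mul_norm_one_add_pow_le_of_friendship_root hroot
    _ ≤ ‖1 + z‖ ^ (2 * n) * Real.exp (n / ‖1 + z‖ ^ 2) :=
        sq_add_one_pow_le_pow_mul_exp (norm_ne_zero_iff.2 hz) n
    _ = Real.exp (n / ‖1 + z‖ ^ 2) * ‖1 + z‖ ^ (2 * n) := mul_comm _ _

theorem one_le_sqrt_natCast_div_log_two {n : ℕ} (hn : 1 ≤ n) :
    1 ≤ Real.sqrt ((n : ℝ) / Real.log 2) := by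
  rw [Real.one_le_sqrt, one_le_div (Real.log_pos one_lt_two)]
  have : (1 : ℝ) ≤ n := by exact_mod_cast hn
  linarith [Real.log_two_lt_d9]

/-- Every complex root `z` of `z^n (z+2)^n + z (1+z)^(2n)` satisfies
`|z| ≤ 1 + √(n / log 2)`. -/
theorem friendship_root_modulus_explicit_bound (n : ℕ) (hn : 1 ≤ n) (z : ℂ)
    (hroot : z ^ n * (z + 2) ^ n + z * (1 + z) ^ (2 * n) = 0) :
    ‖z‖ ≤ 1 + Real.sqrt ((n : ℝ) / Real.log 2) := by
  set s := Real.sqrt ((n : ℝ) / Real.log 2)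
  have hs : 1 ≤ s := one_le_sqrt_natCast_div_log_two hn
  by_contra! hz
  have hsw : s < ‖1 + z‖ := by
    have : ‖z‖ ≤ ‖1 + z‖ + 1 := by
      simpa using norm_sub_le (1 + z) 1
    linarith
  have hw : 0 < ‖1 + z‖ := by linarith
  have hexp : (n : ℝ) / ‖1 + z‖ ^ 2 < Real.log 2 := by
    rw [div_lt_iff₀ (by positivity), ← div_lt_iff₀' (Real.log_pos one_lt_two)]
    exact (Real.sqrt_lt' hw).1 hsw
  have hlt_two : ‖z‖ < 2 := by
    calc ‖z‖ ≤ Real.exp (n / ‖1 + z‖ ^ 2) :=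
          norm_le_exp_of_friendship_root hroot (norm_pos_iff.1 hw)
      _ < Real.exp (Real.log 2) := Real.exp_lt_exp.2 hexp
      _ = 2 := Real.exp_log two_pos
  linarith
end

section
/- For each integer n ≥ 1 there exists a unique real number R_n > 1 satisfying (R_n − 1)^2 · log R_n = n, and every complex number z with z^n (z+2)^n + z (1+z)^{2n} = 0 satisfies |z| ≤ R_n. -/
/-!
With `w = (z + 1)²` the root equation becomes `(w - 1)ⁿ = -z wⁿ`, so `‖z‖ tⁿ ≤ (t + 1)ⁿ` for
`t = ‖w‖ ≥ (‖z‖ - 1)²`. Since `(1 + 1/t)ⁿ ≤ exp (n / t)`, this gives `t log ‖z‖ ≤ n`, hence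
`f ‖z‖ ≤ n = f R` for `f x = (x - 1)² log x`, which is strictly increasing on `[1, ∞)`.
-/

lemma strictMonoOn_sq_sub_one_mul_log :
    StrictMonoOn (fun x : ℝ => (x - 1) ^ 2 * Real.log x) (Set.Ici 1) := by
  intro a (ha : 1 ≤ a) b _ hab
  have hlog_b : 0 < Real.log b := Real.log_pos (ha.trans_lt hab)
  calc (a - 1) ^ 2 * Real.log a ≤ (a - 1) ^ 2 * Real.log b := by gcongr
    _ < (b - 1) ^ 2 * Real.log b := by gcongr

lemma exists_one_lt_sq_sub_one_mul_log_eq {c : ℝ} (hc : 0 < c) :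
    ∃ R, 1 < R ∧ (R - 1) ^ 2 * Real.log R = c := by
  have hlog : 1 ≤ Real.log (c + 3) := by
    rw [Real.le_log_iff_exp_le (by linarith)]
    linarith [Real.exp_one_lt_d9]
  have hcont : ContinuousOn (fun x : ℝ => (x - 1) ^ 2 * Real.log x) (Set.Icc 1 (c + 3)) :=
    (continuous_id.sub continuous_const).pow 2 |>.continuousOn.mul <|
      Real.continuousOn_log.mono fun x hx => ne_of_gt (zero_lt_one.trans_le hx.1)
  obtain ⟨R, ⟨hR1, -⟩, hR⟩ := intermediate_value_Icc (by linarith) hcont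
    ⟨by simpa using hc.le, by nlinarith⟩
  refine ⟨R, hR1.lt_of_ne ?_, hR⟩
  rintro rfl
  simp only [sub_self, Real.log_one, mul_zero] at hR
  exact hc.ne hR

lemma mul_log_le_of_mul_pow_le_add_one_pow {r t : ℝ} {n : ℕ} (hr : 0 < r) (ht : 0 < t)
    (h : r * t ^ n ≤ (t + 1) ^ n) : t * Real.log r ≤ n := by
  have hexp : t + 1 ≤ t * Real.exp (1 / t) :=
    calc t + 1 = t * (1 / t + 1) := by field_simp; ring
      _ ≤ t * Real.exp (1 / t) := by gcongr; exact Real.add_one_le_exp _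
  have hr_le : r * t ^ n ≤ Real.exp (n / t) * t ^ n :=
    calc r * t ^ n ≤ (t + 1) ^ n := h
      _ ≤ (t * Real.exp (1 / t)) ^ n := by gcongr
      _ = Real.exp (n / t) * t ^ n := by
        rw [mul_pow, ← Real.exp_nat_mul, mul_one_div, mul_comm]
  have hlog : Real.log r ≤ n / t :=
    (Real.log_le_iff_le_exp hr).2 (le_of_mul_le_mul_right hr_le (by positivity))
  calc t * Real.log r ≤ t * (n / t) := by gcongr
    _ = n := by field_simp

lemma norm_sq_add_one_sub_one_pow_eq {n : ℕ} {z : ℂ}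
    (hz : z ^ n * (z + 2) ^ n + z * (1 + z) ^ (2 * n) = 0) :
    ‖(z + 1) ^ 2 - 1‖ ^ n = ‖z‖ * ‖(z + 1) ^ 2‖ ^ n := by
  have hw : ((z + 1) ^ 2 - 1) ^ n = -z * ((z + 1) ^ 2) ^ n := by
    rw [← pow_mul, show (z + 1) ^ 2 - 1 = z * (z + 2) by ring, mul_pow, add_comm z 1]
    linear_combination hz
  rw [← norm_pow, hw, norm_mul, norm_neg, norm_pow]

lemma sq_norm_sub_one_mul_log_norm_le {n : ℕ} {z : ℂ}
    (hz : z ^ n * (z + 2) ^ n + z * (1 + z) ^ (2 * n) = 0) (hz1 : 1 < ‖z‖) :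
    (‖z‖ - 1) ^ 2 * Real.log ‖z‖ ≤ n := by
  set t := ‖(z + 1) ^ 2‖ with ht
  have hzt : (‖z‖ - 1) ^ 2 ≤ t := by
    have : ‖z‖ - 1 ≤ ‖z + 1‖ := by simpa using norm_sub_norm_le z (-1)
    rw [ht, norm_pow]
    gcongr
  have hpow : ‖z‖ * t ^ n ≤ (t + 1) ^ n := by
    rw [← norm_sq_add_one_sub_one_pow_eq hz]
    gcongr
    exact (norm_sub_le _ _).trans_eq (by rw [norm_one])
  calc (‖z‖ - 1) ^ 2 * Real.log ‖z‖ ≤ t * Real.log ‖z‖ := by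
        gcongr
        exact Real.log_nonneg hz1.le
    _ ≤ n := mul_log_le_of_mul_pow_le_add_one_pow (by linarith)
        (lt_of_lt_of_le (by nlinarith) hzt) hpow

/-- For each `n ≥ 1` there is a unique `R > 1` with `(R−1)^2 log R = n`, and every complex root
`z` of `z^n (z+2)^n + z (1+z)^(2n)` satisfies `|z| ≤ R`. -/
theorem friendship_root_modulus_optimal_implicit_bound (n : ℕ) (hn : 1 ≤ n) :
    ∃ R : ℝ, (1 < R ∧ (R - 1) ^ 2 * Real.log R = n ∧
      ∀ z : ℂ, z ^ n * (z + 2) ^ n + z * (1 + z) ^ (2 * n) = 0 → ‖z‖ ≤ R) ∧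
    ∀ R' : ℝ, 1 < R' → (R' - 1) ^ 2 * Real.log R' = n → R' = R := by
  obtain ⟨R, hR1, hR⟩ := exists_one_lt_sq_sub_one_mul_log_eq (c := n) (by exact_mod_cast hn)
  have hmono := strictMonoOn_sq_sub_one_mul_log
  refine ⟨R, ⟨hR1, hR, fun z hz => ?_⟩, fun R' hR'1 hR' => ?_⟩
  · rcases le_or_gt ‖z‖ 1 with hz1 | hz1
    · linarith
    · exact (hmono.le_iff_le hz1.le hR1.le).1 (hR ▸ sq_norm_sub_one_mul_log_norm_le hz hz1)
  · exact hmono.injOn hR'1.le hR1.le (hR'.trans hR.symm)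
end

section
/- Let n ≥ 2 be an even integer. Then the polynomial D(B_n,x) = (x^2+2x)^n (2x+1) + x^2 (1+x)^{2n} − 2x^n has at least one real zero in the interval (−∞, −2) and at least one real zero in the interval (−1/2, 0). -/
/-! Intermediate value theorem on sign changes. For even `n ≥ 2`,
`D(-3) = 9·4^n - 7·3^n > 0 > 4 - 2^(n+1) = D(-2)` and
`D(-1/2) = 2^(-n) (2^(-n)/4 - 2) < 0 < D(-1/10)`, the last because
`D(x) = x^n ((x+2)^n (2x+1) - 2) + x^2 (1+x)^(2n)` and `1.9^n · 0.8 > 2`. -/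

def bookDomPoly (n : ℕ) (x : ℝ) : ℝ :=
  (x ^ 2 + 2 * x) ^ n * (2 * x + 1) + x ^ 2 * (1 + x) ^ (2 * n) - 2 * x ^ n

theorem continuous_bookDomPoly (n : ℕ) : Continuous (bookDomPoly n) := by
  unfold bookDomPoly; fun_prop

theorem bookDomPoly_eq_pow_mul_add (n : ℕ) (x : ℝ) :
    bookDomPoly n x = x ^ n * ((x + 2) ^ n * (2 * x + 1) - 2) + x ^ 2 * (1 + x) ^ (2 * n) := by
  rw [bookDomPoly, show x ^ 2 + 2 * x = x * (x + 2) by ring, mul_pow]; ring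

theorem bookDomPoly_neg_three_pos (n : ℕ) : 0 < bookDomPoly n (-3) := by
  have hval : bookDomPoly n (-3) = 9 * 4 ^ n - 5 * 3 ^ n - 2 * (-3) ^ n := by
    rw [bookDomPoly, pow_mul]; norm_num; ring
  have hneg : (-3 : ℝ) ^ n ≤ 3 ^ n := by simpa [abs_pow] using le_abs_self ((-3 : ℝ) ^ n)
  have h34 : (3 : ℝ) ^ n ≤ 4 ^ n := pow_le_pow_left₀ (by norm_num) (by norm_num) n
  have h3 : (0 : ℝ) < 3 ^ n := by positivity
  linarith

theorem bookDomPoly_neg_two_neg {n : ℕ} (hn : 2 ≤ n) (hne : Even n) : bookDomPoly n (-2) < 0 := by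
  have hval : bookDomPoly n (-2) = 4 - 2 * 2 ^ n := by
    rw [bookDomPoly, hne.neg_pow, pow_mul]; norm_num [zero_pow (by omega : n ≠ 0)]
  have h4 : (2 : ℝ) ^ 2 ≤ 2 ^ n := pow_le_pow_right₀ (by norm_num) hn
  linarith

theorem bookDomPoly_neg_half_neg {n : ℕ} (hne : Even n) : bookDomPoly n (-(1 / 2)) < 0 := by
  have hval : bookDomPoly n (-(1 / 2)) = (1 / 2) ^ n * ((1 / 2) ^ n / 4 - 2) := by
    rw [bookDomPoly, hne.neg_pow, pow_mul']; norm_num; ring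
  have hpos : (0 : ℝ) < (1 / 2) ^ n := by positivity
  have hle : ((1 : ℝ) / 2) ^ n ≤ 1 := pow_le_one₀ (by norm_num) (by norm_num)
  rw [hval]; exact mul_neg_of_pos_of_neg hpos (by linarith)

theorem bookDomPoly_neg_tenth_pos {n : ℕ} (hn : 2 ≤ n) (hne : Even n) :
    0 < bookDomPoly n (-(1 / 10)) := by
  rw [bookDomPoly_eq_pow_mul_add]
  have hpow : (0 : ℝ) < (-(1 / 10)) ^ n := hne.pow_pos (by norm_num)
  have hbase : ((19 : ℝ) / 10) ^ 2 ≤ (19 / 10) ^ n := pow_le_pow_right₀ (by norm_num) hn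
  have hfactor : 0 < ((-(1 / 10) : ℝ) + 2) ^ n * (2 * (-(1 / 10)) + 1) - 2 := by norm_num; linarith
  have hrest : (0 : ℝ) ≤ (-(1 / 10)) ^ 2 * (1 + -(1 / 10)) ^ (2 * n) := by positivity
  linarith [mul_pos hpow hfactor]

/-- For even `n ≥ 2`, the book-graph domination polynomial
`D(B_n,x) = (x^2+2x)^n (2x+1) + x^2 (1+x)^(2n) − 2x^n` has a real zero in `(−∞,−2)` and a real
zero in `(−1/2, 0)`. -/
theorem book_real_roots_exist (n : ℕ) (hn : 2 ≤ n) (hne : Even n) :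
    (∃ x : ℝ, x < -2 ∧
      (x ^ 2 + 2 * x) ^ n * (2 * x + 1) + x ^ 2 * (1 + x) ^ (2 * n) - 2 * x ^ n = 0) ∧
    (∃ x : ℝ, x ∈ Set.Ioo (-(1 / 2) : ℝ) 0 ∧
      (x ^ 2 + 2 * x) ^ n * (2 * x + 1) + x ^ 2 * (1 + x) ^ (2 * n) - 2 * x ^ n = 0) := by
  have hcont (a b : ℝ) : ContinuousOn (bookDomPoly n) (Set.Icc a b) :=
    (continuous_bookDomPoly n).continuousOn
  constructor
  · obtain ⟨x, hx, hroot⟩ := intermediate_value_Ioo' (by norm_num : (-3 : ℝ) ≤ -2) (hcont _ _)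
      ⟨bookDomPoly_neg_two_neg hn hne, bookDomPoly_neg_three_pos n⟩
    exact ⟨x, hx.2, hroot⟩
  · obtain ⟨x, hx, hroot⟩ := intermediate_value_Ioo (by norm_num : -(1 / 2) ≤ -(1 / 10 : ℝ))
      (hcont _ _) ⟨bookDomPoly_neg_half_neg hne, bookDomPoly_neg_tenth_pos hn hne⟩
    exact ⟨x, ⟨hx.1, by linarith [hx.2]⟩, hroot⟩
end

section
/- Let n ≥ 1 be an integer. Then for every nonzero integer m, m^n (m+2)^n + m (1+m)^{2n} ≠ 0. Equivalently, the only integer zero of the friendship-graph domination polynomial D(F_n,x) is 0. -/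
/-!
With `a = m (m + 2)` one has `(1 + m)^2 = a + 1`, so a root `m` gives `a^n = -m (a + 1)^n`.
Since `a` and `a + 1` are coprime, `(a + 1)^n ∣ a^n` forces `a + 1 = (1 + m)^2` to be a unit,
i.e. `m = 0` or `m = -2`, and `m = -2` is not a root.
-/

theorem isUnit_add_one_of_pow_add_mul_pow_eq_zero {R : Type*} [CommRing R] {a c : R} {n : ℕ}
    (hn : n ≠ 0) (h : a ^ n + c * (a + 1) ^ n = 0) : IsUnit (a + 1) := by
  have hcop : IsCoprime ((a + 1) ^ n) (a ^ n) := IsCoprime.pow ⟨1, -1, by ring⟩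
  have hdvd : (a + 1) ^ n ∣ a ^ n := ⟨-c, by linear_combination h⟩
  exact (isUnit_pow_iff hn).mp (hcop.isUnit_of_dvd hdvd)

/-- For `n ≥ 1`, the friendship graph `F_n` has no nonzero integer domination root:
for every nonzero integer `m`, `m^n (m+2)^n + m (1+m)^(2n) ≠ 0`. -/
theorem friendship_no_nonzero_integer_root (n : ℕ) (hn : 1 ≤ n) (m : ℤ) (hm : m ≠ 0) :
    m ^ n * (m + 2) ^ n + m * (1 + m) ^ (2 * n) ≠ 0 := by
  intro hroot
  have hn0 : n ≠ 0 := by omega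
  have hsq : (1 + m) ^ 2 = m * (m + 2) + 1 := by ring
  have hunit : IsUnit (1 + m) := by
    rw [← isUnit_pow_iff two_ne_zero, hsq]
    refine isUnit_add_one_of_pow_add_mul_pow_eq_zero (c := m) hn0 ?_
    rwa [← hsq, ← pow_mul, mul_pow]
  rcases Int.isUnit_iff.mp hunit with h | h
  · exact hm (by linarith)
  · obtain rfl : m = -2 := by linarith
    norm_num [zero_pow hn0] at hroot
end

section
/- Let n ≥ 1 be an integer. Then for every nonzero integer m, (m^2+2m)^n (2m+1) + m^2 (1+m)^{2n} − 2m^n ≠ 0. Equivalently, the only integer zero of the book-graph domination polynomial D(B_n,x) is 0. -/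
/-!
Away from `-1` and `-2` the sign of `D(B_n, m)` is forced: for `m ≥ 1` the first term alone beats
`2 m^n`, and for `m ≤ -3` every term is compared with `A = (1 + m)^(2n)`, using
`m^2 + 2m = (1 + m)^2 - 1 ≤ (1 + m)^2` and `|m| ≤ (1 + m)^2`, which gives `D(B_n, m) ≥ A ((1 + m)^2 - 2) > 0`.
At `m = -1` and `m = -2` the value is computed directly.
-/

section

variable {R : Type*} [CommRing R]

def bookDominationPoly (n : ℕ) (x : R) : R :=
  (x ^ 2 + 2 * x) ^ n * (2 * x + 1) + x ^ 2 * (1 + x) ^ (2 * n) - 2 * x ^ n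

variable [LinearOrder R] [IsStrictOrderedRing R]

theorem bookDominationPoly_pos_of_one_le {x : R} (hx : 1 ≤ x) (n : ℕ) :
    0 < bookDominationPoly n x := by
  have hxn : 0 < x ^ n := pow_pos (by linarith) n
  have hle : x ^ n ≤ (x ^ 2 + 2 * x) ^ n := pow_le_pow_left₀ (by linarith) (by nlinarith) n
  have hfirst : x ^ n * 3 ≤ (x ^ 2 + 2 * x) ^ n * (2 * x + 1) :=
    mul_le_mul hle (by linarith) (by norm_num) (hxn.le.trans hle)
  have hsecond : 0 ≤ x ^ 2 * (1 + x) ^ (2 * n) := by positivity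
  unfold bookDominationPoly
  linarith

theorem bookDominationPoly_pos_of_le_neg_three {x : R} (hx : x ≤ -3) (n : ℕ) :
    0 < bookDominationPoly n x := by
  set A := (1 + x) ^ (2 * n) with hA
  have hA_pos : 0 < A := by
    rw [hA, pow_mul]
    exact pow_pos (by nlinarith) n
  have hfirst : A * (2 * x + 1) ≤ (x ^ 2 + 2 * x) ^ n * (2 * x + 1) := by
    refine mul_le_mul_of_nonpos_right ?_ (by linarith)
    rw [hA, pow_mul]
    exact pow_le_pow_left₀ (by nlinarith) (by nlinarith) n
  have hlast : x ^ n ≤ A := by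
    refine (le_abs_self _).trans ?_
    rw [abs_pow, hA, pow_mul, abs_of_neg (by linarith)]
    exact pow_le_pow_left₀ (by linarith) (by nlinarith) n
  calc 0 < A * ((1 + x) ^ 2 - 2) := mul_pos hA_pos (by nlinarith)
    _ = A * (2 * x + 1) + x ^ 2 * A - 2 * A := by ring
    _ ≤ bookDominationPoly n x := by unfold bookDominationPoly; linarith

end

theorem bookDominationPoly_neg_one_ne_zero (n : ℕ) : bookDominationPoly n (-1 : ℤ) ≠ 0 := by
  cases n with
  | zero => decide
  | succ k =>
    have hpow : (-1 : ℤ) ^ (k + 1) ≠ 0 := pow_ne_zero _ (by norm_num)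
    simp only [bookDominationPoly]
    norm_num
    contrapose! hpow
    linarith

theorem bookDominationPoly_neg_two_ne_zero (n : ℕ) : bookDominationPoly n (-2 : ℤ) ≠ 0 := by
  match n with
  | 0 => decide
  | 1 => decide
  | k + 2 =>
    -- the value is `4 - 8 (-2)^k`, which is `4` modulo `8`
    simp only [bookDominationPoly]
    norm_num [pow_succ]
    omega

theorem book_no_nonzero_integer_root_general (n : ℕ) (m : ℤ) (hm : m ≠ 0) :
    (m ^ 2 + 2 * m) ^ n * (2 * m + 1) + m ^ 2 * (1 + m) ^ (2 * n) - 2 * m ^ n ≠ 0 := by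
  change bookDominationPoly n m ≠ 0
  rcases show m = -1 ∨ m = -2 ∨ m ≤ -3 ∨ 1 ≤ m by omega with rfl | rfl | hm3 | hm1
  · exact bookDominationPoly_neg_one_ne_zero n
  · exact bookDominationPoly_neg_two_ne_zero n
  · exact (bookDominationPoly_pos_of_le_neg_three hm3 n).ne'
  · exact (bookDominationPoly_pos_of_one_le hm1 n).ne'

/-- For `n ≥ 1`, the book graph `B_n` has no nonzero integer domination root:
for every nonzero integer `m`, `(m^2+2m)^n (2m+1) + m^2 (1+m)^(2n) − 2m^n ≠ 0`. -/
theorem book_no_nonzero_integer_root (n : ℕ) (hn : 1 ≤ n) (m : ℤ) (hm : m ≠ 0) :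
    (m ^ 2 + 2 * m) ^ n * (2 * m + 1) + m ^ 2 * (1 + m) ^ (2 * n) - 2 * m ^ n ≠ 0 :=
  book_no_nonzero_integer_root_general n m hm
end

section
/- Let n ≥ 1 be an integer and let m ≥ 3 be an integer. Then (m(m−2))^n (1 − 2m) + m^2 (m−1)^{2n} − 2(−m)^n > 0; that is, D(B_n, −m) > 0, where D(B_n,x) = (x^2+2x)^n (2x+1) + x^2 (1+x)^{2n} − 2x^n. -/
/-! With `a = m(m-2)` one has `(m-1)^2 = a + 1 ≥ a`, so the two leading terms are at least
`(m² - (2m - 1)) aⁿ = (m-1)² aⁿ ≥ 4 aⁿ`, and `aⁿ ≥ mⁿ ≥ (-m)ⁿ` because `m - 2 ≥ 1`. -/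

section

variable {R : Type*} [CommRing R] [LinearOrder R] [IsStrictOrderedRing R]

theorem sub_one_sq_mul_pow_le (n : ℕ) {m : R} (hm : 2 ≤ m) :
    (m - 1) ^ 2 * (m * (m - 2)) ^ n ≤
      (m * (m - 2)) ^ n * (1 - 2 * m) + m ^ 2 * (m - 1) ^ (2 * n) := by
  have ha : 0 ≤ m * (m - 2) := mul_nonneg (by linarith) (by linarith)
  have hab : (m * (m - 2)) ^ n ≤ (m - 1) ^ (2 * n) := by
    rw [pow_mul]
    exact pow_le_pow_left₀ ha (by nlinarith) n
  nlinarith [mul_le_mul_of_nonneg_left hab (sq_nonneg m)]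

theorem two_mul_neg_pow_lt (n : ℕ) {m : R} (hm : 3 ≤ m) :
    2 * (-m) ^ n < (m - 1) ^ 2 * (m * (m - 2)) ^ n := by
  have hm0 : 0 ≤ m := by linarith
  have hneg : (-m) ^ n ≤ m ^ n := by
    calc (-m) ^ n ≤ |(-m) ^ n| := le_abs_self _
      _ = m ^ n := by rw [abs_pow, abs_neg, abs_of_nonneg hm0]
  have hpow : m ^ n ≤ (m * (m - 2)) ^ n :=
    pow_le_pow_left₀ hm0 (by nlinarith) n
  have hpos : 0 < m ^ n := pow_pos (by linarith) n
  have hfour : (4 : R) ≤ (m - 1) ^ 2 := by nlinarith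
  nlinarith [mul_le_mul_of_nonneg_right hfour (hpos.le.trans hpow)]

end

theorem book_positive_at_negative_integers_general (n : ℕ) (m : ℤ) (hm : 3 ≤ m) :
    (m * (m - 2)) ^ n * (1 - 2 * m) + m ^ 2 * (m - 1) ^ (2 * n) - 2 * (-m) ^ n > 0 := by
  have hbound := (two_mul_neg_pow_lt n hm).trans_le (sub_one_sq_mul_pow_le n (by linarith))
  linarith

/-- For `n ≥ 1` and integer `m ≥ 3`, one has
`(m(m−2))^n (1−2m) + m^2 (m−1)^(2n) − 2(−m)^n > 0`, i.e. `D(B_n, −m) > 0`. -/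
theorem book_positive_at_negative_integers (n : ℕ) (hn : 1 ≤ n) (m : ℤ) (hm : 3 ≤ m) :
    (m * (m - 2)) ^ n * (1 - 2 * m) + m ^ 2 * (m - 1) ^ (2 * n) - 2 * (-m) ^ n > 0 :=
  book_positive_at_negative_integers_general n m hm
end
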